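/- arXiv:2106.00740 — 2 statements merged into one kernel-verified Lean document; each statement's English description precedes it below -/
import Mathlib

section
/- There exists a probability space carrying random variables (S, X, U) such that (S, X) has the given joint distribution, U takes values in the nonempty subsets of [K], X ∈ U almost surely, U is independent of S, and P(|U| ≤ i) ≥ Σ_{j=1}^{i} θ_j for every i ∈ [K]. -/
/-!
Lay the conditional probabilities out on a grid of cells `(r, a)`, row `r`, column `a`, rows
counted from `0`: the cell has length `ℓ(r, a) = v_{a,r} - v_{a,r-1}`, where
`v_{a,r} = P(X = a | S = s_{a,r})` is the `r`-th smallest value of column `a` and `v_{a,-1} = 0`.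
The private value `s` is *active* in the cell when `r` is at most the rank of `s` in column `a`.
The active cells of `s` in column `a` then have total length `P(X = a | S = s)`, and rows `< j`
have total length `λ_j`. Draw a cell with probability proportional to its length, every row
scaled so that only the first unit of mass is used (row `r` gets weight `θ_{r+1}`), and
independently a residual value for every `s`: an active `s` requests the column of the cell, an
inactive one its residual value. This gives `X` the right conditional law whatever `S` is, the
set `U` of all requests does not depend on `S`, and in row `r` only the `r` values of lowest rank
are inactive, so `|U| ≤ r + 1`.
-/

open MeasureTheory ProbabilityTheory

/-- The (discrete) measurable-space structure on finite sets of `Fin K`. -/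
instance finsetFinMeasurableSpace (K : ℕ) : MeasurableSpace (Finset (Fin K)) := ⊤

open Finset

namespace Obfuscation

section WeightMeasure

variable {β : Type*} [Fintype β] [MeasurableSpace β] [MeasurableSingletonClass β]

noncomputable def weightMeasure (w : β → ℝ) : Measure β :=
  ∑ b, ENNReal.ofReal (w b) • Measure.dirac b

lemma weightMeasure_apply {w : β → ℝ} (hw : ∀ b, 0 ≤ w b) (A : Set β) [DecidablePred (· ∈ A)] :
    weightMeasure w A = ENNReal.ofReal (∑ b with b ∈ A, w b) := by
  rw [ENNReal.ofReal_sum_of_nonneg fun b _ => hw b, sum_filter]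
  simp [weightMeasure, Set.indicator_apply]

lemma isProbabilityMeasure_weightMeasure {w : β → ℝ} (hw : ∀ b, 0 ≤ w b)
    (h1 : ∑ b, w b = 1) : IsProbabilityMeasure (weightMeasure w) := by
  classical
  constructor
  rw [weightMeasure_apply hw]
  simp [h1]

end WeightMeasure

lemma sum_filter_val_lt_eq_sum_range {M : Type*} [AddCommMonoid M] {n j : ℕ} (hj : j ≤ n)
    (f : ℕ → M) :
    ∑ r : Fin n with r.val < j, f r = ∑ r ∈ range j, f r := by
  have : (univ.filter fun r : Fin n => r.val < j).map Fin.valEmbedding = range j := by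
    ext r
    simp only [mem_map, mem_filter, mem_univ, true_and, Fin.valEmbedding_apply, mem_range]
    exact ⟨fun ⟨x, hx, h⟩ => h ▸ hx, fun h => ⟨⟨r, by omega⟩, h, rfl⟩⟩
  rw [← this, sum_map]
  rfl

lemma sum_Icc_one_sub_pred (f : ℕ → ℝ) (i : ℕ) :
    ∑ j ∈ Icc 1 i, (f j - f (j - 1)) = f i - f 0 := by
  induction i with
  | zero => simp
  | succ i ih => rw [sum_Icc_succ_top (by omega), ih, Nat.add_sub_cancel]; ring

lemma min_one_sub_min_one_le {x y : ℝ} (h : x ≤ y) : min 1 y - min 1 x ≤ y - x := by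
  rw [min_def, min_def]
  split_ifs <;> linarith

section Scheme

variable {ι α : Type*} {n : ℕ} (q : α → ι → ℝ) (e : α → Fin n ≃ ι)

def sortedVal (a : α) : ℕ → ℝ
  | 0 => 0
  | k + 1 => if h : k < n then q a (e a ⟨k, h⟩) else 0

def gap (c : Fin n × α) : ℝ := sortedVal q e c.2 (c.1 + 1) - sortedVal q e c.2 c.1

def Active (s : ι) (c : Fin n × α) : Prop := c.1 ≤ (e c.2).symm s

instance (s : ι) (c : Fin n × α) : Decidable (Active e s c) :=
  inferInstanceAs (Decidable (c.1 ≤ (e c.2).symm s))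

lemma sortedVal_succ (a : α) (r : Fin n) : sortedVal q e a (r + 1) = q a (e a r) := by
  simp [sortedVal]

variable {q e}

lemma gap_nonneg (hq0 : ∀ a s, 0 ≤ q a s) (hmono : ∀ a, Monotone (q a ∘ e a))
    (c : Fin n × α) : 0 ≤ gap q e c := by
  obtain ⟨⟨_ | k, hk⟩, a⟩ := c
  · simpa [gap, sortedVal, hk] using hq0 a _
  · rw [gap, sub_nonneg]
    simp only [sortedVal, hk, Nat.lt_of_succ_lt hk, dite_true]
    exact hmono a (Fin.mk_le_mk.2 k.le_succ)

lemma sum_gap_le_rank (a : α) (s : ι) :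
    ∑ r : Fin n with r ≤ (e a).symm s, gap q e (r, a) = q a s := by
  simp_rw [Fin.le_def, ← Nat.lt_succ_iff, gap]
  rw [sum_filter_val_lt_eq_sum_range ((e a).symm s).isLt
      (fun r => sortedVal q e a (r + 1) - sortedVal q e a r),
    sum_range_sub (sortedVal q e a), sortedVal_succ]
  simp [sortedVal]

lemma sum_gap_column (a : α) : ∑ r : Fin n, gap q e (r, a) = sortedVal q e a n := by
  simp only [gap]
  rw [Fin.sum_univ_eq_sum_range (fun r => sortedVal q e a (r + 1) - sortedVal q e a r),
    sum_range_sub]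
  simp [sortedVal]

lemma le_sortedVal_length (hq0 : ∀ a s, 0 ≤ q a s) (hmono : ∀ a, Monotone (q a ∘ e a))
    (a : α) (s : ι) : q a s ≤ sortedVal q e a n := by
  rw [← sum_gap_le_rank (q := q) a s, ← sum_gap_column]
  exact sum_le_sum_of_subset_of_nonneg (filter_subset _ _)
    fun c _ _ => gap_nonneg hq0 hmono _

section Requests

variable [Fintype ι] [DecidableEq α]

variable (e) in
def request (s : ι) (w : (Fin n × α) × (ι → α)) : α := if Active e s w.1 then w.1.2 else w.2 s

variable (e) in
def obfuscationSet (w : (Fin n × α) × (ι → α)) : Finset α := univ.image fun s => request e s w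

lemma request_mem_obfuscationSet (s : ι) (w : (Fin n × α) × (ι → α)) :
    request e s w ∈ obfuscationSet e w :=
  mem_image_of_mem _ (mem_univ s)

lemma card_obfuscationSet_le (w : (Fin n × α) × (ι → α)) :
    #(obfuscationSet e w) ≤ w.1.1 + 1 := by
  obtain ⟨⟨r, a⟩, g⟩ := w
  set inactive := univ.filter fun s => ¬Active e s (r, a)
  have hsub : obfuscationSet e ((r, a), g) ⊆ insert a (inactive.image g) := by
    intro x hx
    obtain ⟨s, -, rfl⟩ := mem_image.1 hx
    by_cases h : Active e s (r, a)
    · simp [request, h]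
    · exact mem_insert_of_mem (mem_image.2 ⟨s, by simpa [inactive] using h, by simp [request, h]⟩)
  have hinactive : #inactive ≤ r :=
    calc #inactive ≤ #(Iio r) := card_le_card_of_injOn (e a).symm
            (fun s hs => by simpa [inactive, Active] using hs) (e a).symm.injective.injOn
      _ = r := Fin.card_Iio r
  calc #(obfuscationSet e ((r, a), g)) ≤ #(insert a (inactive.image g)) := card_le_card hsub
    _ ≤ #(inactive.image g) + 1 := card_insert_le _ _
    _ ≤ r + 1 := by gcongr; exact card_image_le.trans hinactive

end Requests

variable [Fintype α]

variable (q e) in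
def level (k : ℕ) : ℝ := ∑ a, sortedVal q e a k

variable (q e) in
noncomputable def rowFraction (r : ℕ) : ℝ :=
  (min 1 (level q e (r + 1)) - min 1 (level q e r)) / (level q e (r + 1) - level q e r)

variable (q e) in
noncomputable def cellWeight (c : Fin n × α) : ℝ := rowFraction q e c.1 * gap q e c

variable (q e) in
noncomputable def inactiveMass (s : ι) : ℝ := ∑ c with ¬Active e s c, cellWeight q e c

lemma level_zero : level q e 0 = 0 := by simp [level, sortedVal]

lemma level_succ (r : Fin n) : level q e (r + 1) = ∑ a, q a (e a r) := by
  simp [level, sortedVal_succ]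

lemma one_le_level [Nonempty ι] (hq0 : ∀ a s, 0 ≤ q a s) (hmono : ∀ a, Monotone (q a ∘ e a))
    (hsum : ∀ s, ∑ a, q a s = 1) : 1 ≤ level q e n := by
  obtain ⟨s⟩ := ‹Nonempty ι›
  rw [← hsum s]
  exact sum_le_sum fun a _ => le_sortedVal_length hq0 hmono a s

lemma sum_gap_row (r : Fin n) : ∑ a, gap q e (r, a) = level q e (r + 1) - level q e r := by
  simp [gap, level, sum_sub_distrib]

lemma rowFraction_mem_Icc (hq0 : ∀ a s, 0 ≤ q a s) (hmono : ∀ a, Monotone (q a ∘ e a))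
    (r : Fin n) : rowFraction q e r ∈ Set.Icc 0 1 := by
  have hle : level q e r ≤ level q e (r + 1) := by
    rw [← sub_nonneg, ← sum_gap_row]
    exact sum_nonneg fun a _ => gap_nonneg hq0 hmono _
  exact ⟨div_nonneg (sub_nonneg.2 (min_le_min_left _ hle)) (sub_nonneg.2 hle),
    div_le_one_of_le₀ (min_one_sub_min_one_le hle) (sub_nonneg.2 hle)⟩

lemma cellWeight_nonneg (hq0 : ∀ a s, 0 ≤ q a s) (hmono : ∀ a, Monotone (q a ∘ e a))
    (c : Fin n × α) : 0 ≤ cellWeight q e c :=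
  mul_nonneg (rowFraction_mem_Icc hq0 hmono c.1).1 (gap_nonneg hq0 hmono c)

lemma cellWeight_le_gap (hq0 : ∀ a s, 0 ≤ q a s) (hmono : ∀ a, Monotone (q a ∘ e a))
    (c : Fin n × α) : cellWeight q e c ≤ gap q e c :=
  mul_le_of_le_one_left (gap_nonneg hq0 hmono c) (rowFraction_mem_Icc hq0 hmono c.1).2

lemma sum_row_cellWeight (r : Fin n) :
    ∑ a, cellWeight q e (r, a) = min 1 (level q e (r + 1)) - min 1 (level q e r) := by
  simp only [cellWeight, ← mul_sum, sum_gap_row, rowFraction]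
  by_cases h : level q e (r + 1) - level q e r = 0
  · rw [sub_eq_zero.1 h, sub_self, zero_div, zero_mul]
  · exact div_mul_cancel₀ _ h

lemma sum_cellWeight_rows_lt {j : ℕ} (hj : j ≤ n) :
    ∑ c : Fin n × α with c.1.val < j, cellWeight q e c = min 1 (level q e j) := by
  have : (univ.filter fun c : Fin n × α => c.1.val < j) = univ.filter (·.val < j) ×ˢ univ := by
    ext; simp
  rw [this, sum_product, sum_congr rfl fun r _ => sum_row_cellWeight r,
    sum_filter_val_lt_eq_sum_range hj (fun r => min 1 (level q e (r + 1)) - min 1 (level q e r)),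
    sum_range_sub (fun r => min 1 (level q e r)), level_zero, min_eq_right zero_le_one, sub_zero]

lemma sum_cellWeight [Nonempty ι] (hq0 : ∀ a s, 0 ≤ q a s) (hmono : ∀ a, Monotone (q a ∘ e a))
    (hsum : ∀ s, ∑ a, q a s = 1) : ∑ c, cellWeight q e c = 1 := by
  have h := sum_cellWeight_rows_lt (q := q) (e := e) (α := α) le_rfl
  rwa [filter_true_of_mem fun c _ => c.1.isLt, min_eq_left (one_le_level hq0 hmono hsum)] at h

lemma inactiveMass_nonneg (hq0 : ∀ a s, 0 ≤ q a s) (hmono : ∀ a, Monotone (q a ∘ e a))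
    (s : ι) : 0 ≤ inactiveMass q e s :=
  sum_nonneg fun c _ => cellWeight_nonneg hq0 hmono c

variable [DecidableEq α]

variable (q e) in
noncomputable def activeMass (s : ι) (a : α) : ℝ :=
  ∑ c ∈ ({c | Active e s c} : Finset _) with c.2 = a, cellWeight q e c

variable (q e) in
/-- If `inactiveMass q e s = 0` the inactive cells of `s` have weight zero, so any law will do. -/
noncomputable def residualLaw (s : ι) (a : α) : ℝ :=
  if inactiveMass q e s = 0 then q a s else (q a s - activeMass q e s a) / inactiveMass q e s

lemma activeMass_le (hq0 : ∀ a s, 0 ≤ q a s) (hmono : ∀ a, Monotone (q a ∘ e a))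
    (s : ι) (a : α) : activeMass q e s a ≤ q a s := by
  have : activeMass q e s a = ∑ r : Fin n with r ≤ (e a).symm s, cellWeight q e (r, a) := by
    rw [activeMass, filter_filter, sum_filter, Fintype.sum_prod_type, sum_filter]
    simp only [Active, and_comm, ite_and, sum_ite_eq', mem_univ, if_true]
  rw [this, ← sum_gap_le_rank (q := q) a s]
  exact sum_le_sum fun c _ => cellWeight_le_gap hq0 hmono _

lemma sum_sub_activeMass [Nonempty ι] (hq0 : ∀ a s, 0 ≤ q a s)
    (hmono : ∀ a, Monotone (q a ∘ e a)) (hsum : ∀ s, ∑ a, q a s = 1) (s : ι) :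
    ∑ a, (q a s - activeMass q e s a) = inactiveMass q e s := by
  simp only [activeMass]
  rw [sum_sub_distrib, hsum, sum_fiberwise, ← sum_cellWeight hq0 hmono hsum,
    ← sum_filter_add_sum_filter_not univ (Active e s), inactiveMass, add_sub_cancel_left]

lemma activeMass_add_inactiveMass_mul_residualLaw [Nonempty ι] (hq0 : ∀ a s, 0 ≤ q a s)
    (hmono : ∀ a, Monotone (q a ∘ e a)) (hsum : ∀ s, ∑ a, q a s = 1) (s : ι) (a : α) :
    activeMass q e s a + inactiveMass q e s * residualLaw q e s a = q a s := by
  rw [residualLaw]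
  split_ifs with h
  · have hres := (sum_eq_zero_iff_of_nonneg fun b _ => sub_nonneg.2
      (activeMass_le hq0 hmono s b)).1 ((sum_sub_activeMass hq0 hmono hsum s).trans h)
    rw [h, zero_mul, add_zero]
    linarith [hres a (mem_univ a)]
  · rw [mul_div_cancel₀ _ h, add_sub_cancel]

lemma residualLaw_nonneg (hq0 : ∀ a s, 0 ≤ q a s) (hmono : ∀ a, Monotone (q a ∘ e a))
    (s : ι) (a : α) : 0 ≤ residualLaw q e s a := by
  rw [residualLaw]
  split_ifs
  · exact hq0 a s
  · exact div_nonneg (sub_nonneg.2 (activeMass_le hq0 hmono s a))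
      (inactiveMass_nonneg hq0 hmono s)

lemma sum_residualLaw [Nonempty ι] (hq0 : ∀ a s, 0 ≤ q a s)
    (hmono : ∀ a, Monotone (q a ∘ e a)) (hsum : ∀ s, ∑ a, q a s = 1) (s : ι) :
    ∑ a, residualLaw q e s a = 1 := by
  simp only [residualLaw]
  split_ifs with h
  · exact hsum s
  · rw [← sum_div, sum_sub_activeMass hq0 hmono hsum, div_self h]

variable [MeasurableSpace α] [MeasurableSingletonClass α]

lemma isProbabilityMeasure_weightMeasure_residualLaw [Nonempty ι] (hq0 : ∀ a s, 0 ≤ q a s)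
    (hmono : ∀ a, Monotone (q a ∘ e a)) (hsum : ∀ s, ∑ a, q a s = 1) (s : ι) :
    IsProbabilityMeasure (weightMeasure (residualLaw q e s)) :=
  isProbabilityMeasure_weightMeasure (residualLaw_nonneg hq0 hmono s)
    (sum_residualLaw hq0 hmono hsum s)

variable [Fintype ι]

variable (q e) in
noncomputable def sourceMeasure : Measure ((Fin n × α) × (ι → α)) :=
  (weightMeasure (cellWeight q e)).prod (Measure.pi fun s => weightMeasure (residualLaw q e s))

lemma isProbabilityMeasure_sourceMeasure [Nonempty ι] (hq0 : ∀ a s, 0 ≤ q a s)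
    (hmono : ∀ a, Monotone (q a ∘ e a)) (hsum : ∀ s, ∑ a, q a s = 1) :
    IsProbabilityMeasure (sourceMeasure q e) := by
  have := isProbabilityMeasure_weightMeasure (cellWeight_nonneg hq0 hmono)
    (sum_cellWeight hq0 hmono hsum)
  have := isProbabilityMeasure_weightMeasure_residualLaw hq0 hmono hsum
  rw [sourceMeasure]
  infer_instance

lemma sourceMeasure_request [Nonempty ι] (hq0 : ∀ a s, 0 ≤ q a s)
    (hmono : ∀ a, Monotone (q a ∘ e a)) (hsum : ∀ s, ∑ a, q a s = 1) (s : ι) (a : α) :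
    sourceMeasure q e {w | request e s w = a} = ENNReal.ofReal (q a s) := by
  have := isProbabilityMeasure_weightMeasure_residualLaw hq0 hmono hsum
  have hw := cellWeight_nonneg hq0 hmono
  have hset : {w | request e s w = a} = {c | Active e s c ∧ c.2 = a} ×ˢ Set.univ ∪
      {c | ¬Active e s c} ×ˢ (Function.eval s ⁻¹' ({a} : Set α)) := by
    ext ⟨c, g⟩
    by_cases h : Active e s c <;> simp [request, h]
  have hdisj : Disjoint ({c | Active e s c ∧ c.2 = a} ×ˢ (Set.univ : Set (ι → α)))
      ({c | ¬Active e s c} ×ˢ (Function.eval s ⁻¹' ({a} : Set α))) :=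
    Set.disjoint_prod.2 (Or.inl (Set.disjoint_left.2 fun _ h1 h2 => h2 h1.1))
  rw [hset, measure_union hdisj ((Set.toFinite _).measurableSet.prod
      (measurable_pi_apply s (measurableSet_singleton a))), sourceMeasure,
    Measure.prod_prod, Measure.prod_prod, measure_univ, mul_one,
    (measurePreserving_eval _ s).measure_preimage (measurableSet_singleton a).nullMeasurableSet,
    weightMeasure_apply hw, weightMeasure_apply hw,
    weightMeasure_apply (residualLaw_nonneg hq0 hmono s)]
  simp only [Set.mem_ofPred_eq, Set.mem_singleton_iff, filter_eq', mem_univ, if_true,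
    sum_singleton]
  rw [← filter_filter, ← activeMass, ← inactiveMass, ← ENNReal.ofReal_mul, ← ENNReal.ofReal_add,
    activeMass_add_inactiveMass_mul_residualLaw hq0 hmono hsum]
  · exact sum_nonneg fun c _ => hw c
  · exact mul_nonneg (inactiveMass_nonneg hq0 hmono s) (residualLaw_nonneg hq0 hmono s a)
  · exact inactiveMass_nonneg hq0 hmono s

lemma ofReal_min_one_level_le [Nonempty ι] (hq0 : ∀ a s, 0 ≤ q a s)
    (hmono : ∀ a, Monotone (q a ∘ e a)) (hsum : ∀ s, ∑ a, q a s = 1) {j : ℕ} (hj : j ≤ n) :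
    ENNReal.ofReal (min 1 (level q e j)) ≤ sourceMeasure q e {w | #(obfuscationSet e w) ≤ j} := by
  have := isProbabilityMeasure_weightMeasure_residualLaw hq0 hmono hsum
  calc ENNReal.ofReal (min 1 (level q e j))
      = sourceMeasure q e ({c | c.1.val < j} ×ˢ Set.univ) := by
        rw [sourceMeasure, Measure.prod_prod, measure_univ, mul_one,
          weightMeasure_apply (cellWeight_nonneg hq0 hmono)]
        simp only [Set.mem_ofPred_eq]
        rw [sum_cellWeight_rows_lt hj]
    _ ≤ _ := measure_mono fun w hw => by
        have := card_obfuscationSet_le (e := e) w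
        simp only [Set.mem_prod, Set.mem_ofPred_eq] at hw ⊢
        omega

end Scheme

section Coupling

variable {ι W α : Type*} [MeasurableSpace ι] [MeasurableSpace W] [MeasurableSpace α]

lemma measure_fst_mul_ofReal_toReal_div (p : Measure (ι × α)) [IsFiniteMeasure p] {s : ι}
    (hs : p {x | x.1 = s} ≠ 0) (a : α) :
    p {x | x.1 = s} * ENNReal.ofReal ((p {(s, a)}).toReal / (p {x | x.1 = s}).toReal) =
      p {(s, a)} := by
  rw [ENNReal.ofReal_div_of_pos (ENNReal.toReal_pos hs (measure_ne_top _ _)),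
    ENNReal.ofReal_toReal (measure_ne_top _ _), ENNReal.ofReal_toReal (measure_ne_top _ _),
    ENNReal.mul_div_cancel hs (measure_ne_top _ _)]

variable [MeasurableSingletonClass (ι × α)]

lemma map_prod_apply_singleton (ν : Measure ι) (μ : Measure W) [SFinite ν] [SFinite μ]
    (f : ι → W → α) (hf : Measurable fun ω : ι × W => (ω.1, f ω.1 ω.2)) (s : ι) (a : α) :
    (ν.prod μ).map (fun ω => (ω.1, f ω.1 ω.2)) {(s, a)} = ν {s} * μ {w | f s w = a} := by
  have : (fun ω : ι × W => (ω.1, f ω.1 ω.2)) ⁻¹' {(s, a)} = {s} ×ˢ {w | f s w = a} := by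
    ext ⟨s', w⟩
    simp only [Set.mem_preimage, Set.mem_singleton_iff, Prod.mk.injEq, Set.mem_prod,
      Set.mem_ofPred_eq]
    exact and_congr_right fun h => h ▸ Iff.rfl
  rw [Measure.map_apply hf (measurableSet_singleton _), this, Measure.prod_prod]

lemma sum_measure_singleton_eq_fst [Fintype α] (p : Measure (ι × α)) (s : ι) :
    ∑ a, p {(s, a)} = p {x | x.1 = s} := by
  have : ((univ : Finset α).map ⟨Prod.mk s, Prod.mk_right_injective s⟩ : Set (ι × α)) =
      {x | x.1 = s} := by
    ext ⟨s', a⟩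
    simp [eq_comm]
  rw [← this, ← sum_measure_singleton, sum_map]
  rfl

lemma sum_toReal_div_measure_fst [Fintype α] (p : Measure (ι × α)) [IsFiniteMeasure p] {s : ι}
    (hs : p {x | x.1 = s} ≠ 0) :
    ∑ a, (p {(s, a)}).toReal / (p {x | x.1 = s}).toReal = 1 := by
  rw [← sum_div, ← ENNReal.toReal_sum fun _ _ => measure_ne_top p _,
    sum_measure_singleton_eq_fst, div_self (ENNReal.toReal_ne_zero.2 ⟨hs, measure_ne_top _ _⟩)]

end Coupling

end Obfuscation

open Obfuscation

/-- **Lemma 1 (obfuscation lemma).**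
Let `(S, X)` have joint law `p` on `[K] × [K]` with `P(S = s) > 0` for all `s`, and for each
`i ∈ [K]` let `s_{i,1}, …, s_{i,K}` (here `e i`) enumerate `[K]` so that
`j ↦ P(X = i | S = s_{i,j})` is nondecreasing; with `λ_0 = 0`,
`λ_j = Σ_i P(X = i | S = s_{i,j})` and `θ_j = min 1 λ_j − min 1 λ_{j−1}`.
Then there exists a probability space carrying random variables `(S, X, U)` such that `(S, X)` has
joint law `p`, `U` takes values in the nonempty subsets of `[K]`, `X ∈ U` almost surely, `U` is
independent of `S`, and `P(|U| ≤ i) ≥ Σ_{j=1}^{i} θ_j` for every `i ∈ [K]`. -/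
theorem obfuscation_lemma
    (K : ℕ) (hK : 1 ≤ K)
    (p : Measure (Fin K × Fin K)) [IsProbabilityMeasure p]
    (hpos : ∀ s : Fin K, 0 < p {q | q.1 = s})
    (e : Fin K → Fin K → Fin K)
    (hbij : ∀ i, Function.Bijective (e i))
    (condP : Fin K → Fin K → ℝ)
    (hcondP : ∀ i s : Fin K,
      condP i s = (p {(s, i)}).toReal / (p {q | q.1 = s}).toReal)
    (hmono : ∀ i : Fin K, Monotone fun j => condP i (e i j))
    (lam : ℕ → ℝ)
    (hlam0 : lam 0 = 0)
    (hlam : ∀ j : Fin K, lam (j + 1) = ∑ i : Fin K, condP i (e i j))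
    (θ : ℕ → ℝ)
    (hθ : ∀ j : ℕ, 1 ≤ j → j ≤ K → θ j = min 1 (lam j) - min 1 (lam (j - 1))) :
    ∃ (Ω : Type) (_ : MeasurableSpace Ω) (μ : Measure Ω) (_ : IsProbabilityMeasure μ)
      (S X : Ω → Fin K) (U : Ω → Finset (Fin K)),
      Measurable S ∧ Measurable X ∧ Measurable U ∧
      μ.map (fun ω => (S ω, X ω)) = p ∧
      (∀ ω, (U ω).Nonempty) ∧
      (∀ᵐ ω ∂μ, X ω ∈ U ω) ∧
      IndepFun U S μ ∧
      ∀ i : ℕ, 1 ≤ i → i ≤ K →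
        (∑ j ∈ Finset.Icc 1 i, θ j) ≤ (μ {ω | (U ω).card ≤ i}).toReal := by
  have : Nonempty (Fin K) := ⟨⟨0, hK⟩⟩
  let e' a := Equiv.ofBijective (e a) (hbij a)
  have hq0 a s : 0 ≤ condP a s := hcondP a s ▸ by positivity
  have hsum s : ∑ a, condP a s = 1 := by
    simp_rw [hcondP]
    exact sum_toReal_div_measure_fst p (hpos s).ne'
  have := isProbabilityMeasure_sourceMeasure (e := e') hq0 hmono hsum
  have := Measure.isProbabilityMeasure_map (μ := p) measurable_fst.aemeasurable
  refine ⟨_, inferInstance, (p.map Prod.fst).prod (sourceMeasure condP e'), inferInstance,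
    Prod.fst, fun ω => request e' ω.1 ω.2, fun ω => obfuscationSet e' ω.2, measurable_fst,
    measurable_of_countable _, measurable_of_countable _, ?_,
    fun ω => ⟨_, request_mem_obfuscationSet ω.1 ω.2⟩,
    ae_of_all _ fun ω => request_mem_obfuscationSet ω.1 ω.2,
    (indepFun_prod measurable_id (measurable_of_countable _)).symm, ?_⟩
  · refine Measure.ext_of_singleton fun ⟨s, a⟩ => ?_
    rw [map_prod_apply_singleton _ _ _ (measurable_of_countable _),
      Measure.map_apply measurable_fst (measurableSet_singleton s),
      sourceMeasure_request hq0 hmono hsum, hcondP]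
    exact measure_fst_mul_ofReal_toReal_div p (hpos s).ne' a
  · intro i hi hiK
    obtain ⟨r, rfl⟩ : ∃ r : Fin K, i = r + 1 := ⟨⟨i - 1, by omega⟩, by simp; omega⟩
    have hθsum : ∑ j ∈ Icc 1 ((r : ℕ) + 1), θ j = min 1 (level condP e' (r + 1)) := by
      rw [sum_congr rfl fun j hj => hθ j (mem_Icc.1 hj).1 ((mem_Icc.1 hj).2.trans hiK),
        sum_Icc_one_sub_pred (fun j => min 1 (lam j)), hlam0, min_eq_right zero_le_one,
        sub_zero, hlam r, level_succ]
      rfl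
    rw [hθsum, ← ENNReal.ofReal_le_iff_le_toReal (measure_ne_top _ _)]
    exact (ofReal_min_one_level_le hq0 hmono hsum hiK).trans_eq
      (measurePreserving_snd.measure_preimage (Set.toFinite _).measurableSet.nullMeasurableSet).symm
end

section
/- Let S, X, U, Q be random variables defined on a probability space, each taking values in a finite (or standard Borel) measurable space. Assume that U is independent of S, that Q is conditionally independent of X given U, and that Q is conditionally independent of S given the pair (X, U). Then Q is independent of S. -/
/-!
Since `Q ⟂ X | U`, conditioning an event `A ∈ σ(Q)` on `σ(X, U)` gives the same as conditioning on
`σ(U)`. With `Q ⟂ S | (X, U)` and the tower property this yields `Q ⟂ S | U` (contraction).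
Integrating `μ⟦A ∩ B | U⟧ = μ⟦A | U⟧ * μ⟦B | U⟧` for `B ∈ σ(S)`, where `μ⟦B | U⟧ = μ B` because
`U ⟂ S`, gives `μ (A ∩ B) = μ A * μ B`.
-/

open MeasureTheory ProbabilityTheory Filter

section PiSystem

variable {α : Type*}

lemma IsPiSystem.image2_inter {p₁ p₂ : Set (Set α)} (h₁ : IsPiSystem p₁) (h₂ : IsPiSystem p₂) :
    IsPiSystem (Set.image2 (· ∩ ·) p₁ p₂) := by
  rintro _ ⟨a, ha, b, hb, rfl⟩ _ ⟨c, hc, d, hd, rfl⟩ hne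
  have hne' : (a ∩ b ∩ (c ∩ d)).Nonempty := hne
  refine ⟨a ∩ c, h₁ a ha c hc (hne'.mono ?_), b ∩ d, h₂ b hb d hd (hne'.mono ?_), ?_⟩
  · exact fun x hx => ⟨hx.1.1, hx.2.1⟩
  · exact fun x hx => ⟨hx.1.2, hx.2.2⟩
  · exact Set.inter_inter_inter_comm a c b d

lemma MeasurableSpace.generateFrom_image2_inter (m₁ m₂ : MeasurableSpace α) :
    MeasurableSpace.generateFrom
      (Set.image2 (· ∩ ·) {s | MeasurableSet[m₁] s} {s | MeasurableSet[m₂] s}) = m₁ ⊔ m₂ := by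
  refine le_antisymm (MeasurableSpace.generateFrom_le ?_) (sup_le ?_ ?_)
  · rintro _ ⟨a, ha, b, hb, rfl⟩
    exact (le_sup_left (b := m₂) a ha).inter (le_sup_right (a := m₁) b hb)
  · intro a ha
    exact MeasurableSpace.measurableSet_generateFrom
      ⟨a, ha, Set.univ, MeasurableSet.univ, Set.inter_univ a⟩
  · intro b hb
    exact MeasurableSpace.measurableSet_generateFrom
      ⟨Set.univ, MeasurableSet.univ, b, hb, Set.univ_inter b⟩

end PiSystem

lemma setIntegral_eq_of_isPiSystem {Ω : Type*} {m mΩ : MeasurableSpace Ω} {μ : Measure Ω}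
    {p : Set (Set Ω)} {f g : Ω → ℝ} (hm : m ≤ mΩ) (h_eq : m = MeasurableSpace.generateFrom p)
    (h_pi : IsPiSystem p) (hf : Integrable f μ) (hg : Integrable g μ)
    (h_univ : ∫ x, f x ∂μ = ∫ x, g x ∂μ) (basic : ∀ t ∈ p, ∫ x in t, f x ∂μ = ∫ x in t, g x ∂μ)
    {t : Set Ω} (ht : MeasurableSet[m] t) : ∫ x in t, f x ∂μ = ∫ x in t, g x ∂μ := by
  induction t, ht using MeasurableSpace.induction_on_inter h_eq h_pi with
  | empty => simp
  | basic t ht => exact basic t ht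
  | compl t ht ih =>
    rw [setIntegral_compl (hm t ht) hf, setIntegral_compl (hm t ht) hg, ih, h_univ]
  | iUnion t hdisj ht ih =>
    rw [integral_iUnion (fun i => hm _ (ht i)) hdisj hf.integrableOn,
      integral_iUnion (fun i => hm _ (ht i)) hdisj hg.integrableOn]
    exact tsum_congr ih

section CondIndep

variable {Ω : Type*} {m' m₁ m₂ m₃ mΩ : MeasurableSpace Ω} {μ : Measure Ω}

lemma ae_norm_condExp_indicator_le_one (s : Set Ω) : ∀ᵐ x ∂μ, ‖(μ⟦s | m'⟧) x‖ ≤ 1 := by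
  refine ae_bdd_abs_condExp_of_ae_bdd_abs (R := (1 : ℝ)) (ae_of_all _ fun x => ?_)
  by_cases hx : x ∈ s <;> simp [hx]

variable [StandardBorelSpace Ω] [IsFiniteMeasure μ]

lemma condExp_indicator_sup_ae_eq_of_condIndep (hm' : m' ≤ mΩ) (hm₁ : m₁ ≤ mΩ) (hm₂ : m₂ ≤ mΩ)
    (h : CondIndep m' m₁ m₂ hm' μ) {s : Set Ω} (hs : MeasurableSet[m₁] s) :
    μ⟦s | m' ⊔ m₂⟧ =ᵐ[μ] μ⟦s | m'⟧ := by
  have h_ind {t : Set Ω} (ht : MeasurableSet t) :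
      Integrable (t.indicator fun _ => (1 : ℝ)) μ :=
    (integrable_const 1).indicator ht
  refine (ae_eq_condExp_of_forall_setIntegral_eq (sup_le hm' hm₂) (h_ind (hm₁ s hs))
    (fun _ _ _ => integrable_condExp.integrableOn) (fun t ht _ => ?_)
    (stronglyMeasurable_condExp.mono (le_sup_left : m' ≤ m' ⊔ m₂)).aestronglyMeasurable).symm
  refine setIntegral_eq_of_isPiSystem (sup_le hm' hm₂)
    (MeasurableSpace.generateFrom_image2_inter m' m₂).symm
    ((@MeasurableSpace.isPiSystem_measurableSet _ m').image2_inter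
      (@MeasurableSpace.isPiSystem_measurableSet _ m₂))
    integrable_condExp (h_ind (hm₁ s hs)) (integral_condExp hm') ?_ ht
  rintro _ ⟨D, hD, C, hC, rfl⟩
  have h_mul : μ⟦s | m'⟧ * C.indicator (fun _ => 1) = C.indicator (μ⟦s | m'⟧) := by
    ext x
    by_cases hx : x ∈ C <;> simp [hx]
  have h_pull : μ[C.indicator (μ⟦s | m'⟧) | m'] =ᵐ[μ] μ⟦s | m'⟧ * μ⟦C | m'⟧ := by
    rw [← h_mul]
    exact condExp_stronglyMeasurable_mul_of_bound hm' stronglyMeasurable_condExp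
      (h_ind (hm₂ C hC)) 1 (ae_norm_condExp_indicator_le_one s)
  have h_indep : μ⟦s ∩ C | m'⟧ =ᵐ[μ] μ⟦s | m'⟧ * μ⟦C | m'⟧ :=
    (condIndep_iff _ _ _ hm' hm₁ hm₂ μ).1 h s C hs hC
  calc ∫ x in D ∩ C, (μ⟦s | m'⟧) x ∂μ
      = ∫ x in D, μ[C.indicator (μ⟦s | m'⟧) | m'] x ∂μ := by
        rw [setIntegral_condExp hm' (integrable_condExp.indicator (hm₂ C hC)) hD,
          setIntegral_indicator (hm₂ C hC)]
    _ = ∫ x in D, (μ⟦s ∩ C | m'⟧) x ∂μ :=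
        setIntegral_congr_ae (hm' D hD) ((h_pull.trans h_indep.symm).mono fun x hx _ => hx)
    _ = ∫ x in D ∩ C, s.indicator (fun _ => (1 : ℝ)) x ∂μ := by
        rw [setIntegral_condExp hm' (h_ind ((hm₁ s hs).inter (hm₂ C hC))) hD,
          ← setIntegral_indicator (hm₂ C hC), Set.indicator_indicator, Set.inter_comm]

lemma condIndep_of_condIndep_sup (hm' : m' ≤ mΩ) (hm₁ : m₁ ≤ mΩ) (hm₂ : m₂ ≤ mΩ)
    (hm₃ : m₃ ≤ mΩ) (h₁₂ : CondIndep m' m₁ m₂ hm' μ)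
    (h₁₃ : CondIndep (m' ⊔ m₂) m₁ m₃ (sup_le hm' hm₂) μ) : CondIndep m' m₁ m₃ hm' μ := by
  rw [condIndep_iff _ _ _ hm' hm₁ hm₃]
  rw [condIndep_iff _ _ _ _ hm₁ hm₃] at h₁₃
  intro A B hA hB
  calc μ⟦A ∩ B | m'⟧
      =ᵐ[μ] μ[μ⟦A ∩ B | m' ⊔ m₂⟧ | m'] :=
        (condExp_condExp_of_le le_sup_left (sup_le hm' hm₂)).symm
    _ =ᵐ[μ] μ[μ⟦A | m' ⊔ m₂⟧ * μ⟦B | m' ⊔ m₂⟧ | m'] := condExp_congr_ae (h₁₃ A B hA hB)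
    _ =ᵐ[μ] μ[μ⟦A | m'⟧ * μ⟦B | m' ⊔ m₂⟧ | m'] :=
        condExp_congr_ae ((condExp_indicator_sup_ae_eq_of_condIndep hm' hm₁ hm₂ h₁₂ hA).mul
          EventuallyEq.rfl)
    _ =ᵐ[μ] μ⟦A | m'⟧ * μ[μ⟦B | m' ⊔ m₂⟧ | m'] :=
        condExp_stronglyMeasurable_mul_of_bound hm' stronglyMeasurable_condExp integrable_condExp 1
          (ae_norm_condExp_indicator_le_one A)
    _ =ᵐ[μ] μ⟦A | m'⟧ * μ⟦B | m'⟧ :=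
        EventuallyEq.rfl.mul (condExp_condExp_of_le le_sup_left (sup_le hm' hm₂))

lemma indep_of_condIndep_of_indep [IsProbabilityMeasure μ] (hm' : m' ≤ mΩ) (hm₁ : m₁ ≤ mΩ)
    (hm₂ : m₂ ≤ mΩ) (h : CondIndep m' m₁ m₂ hm' μ) (h' : Indep m' m₂ μ) : Indep m₁ m₂ μ := by
  rw [Indep_iff]
  intro A B hA hB
  have h_const : μ⟦B | m'⟧ =ᵐ[μ] fun _ => μ.real B := by
    refine (condExp_indep_eq hm₂ hm' (stronglyMeasurable_const.indicator hB) h'.symm).trans ?_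
    simp [integral_indicator (hm₂ B hB)]
  have h_real : μ.real (A ∩ B) = μ.real A * μ.real B := calc
    μ.real (A ∩ B) = ∫ x, (μ⟦A ∩ B | m'⟧) x ∂μ := by
      rw [integral_condExp hm']
      exact (integral_indicator_one ((hm₁ A hA).inter (hm₂ B hB))).symm
    _ = ∫ x, (μ⟦A | m'⟧) x * μ.real B ∂μ :=
      integral_congr_ae (((condIndep_iff _ _ _ hm' hm₁ hm₂ μ).1 h A B hA hB).trans
        (EventuallyEq.rfl.mul h_const))
    _ = μ.real A * μ.real B := by
      rw [integral_mul_const, integral_condExp hm']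
      exact congrArg (· * μ.real B) (integral_indicator_one (hm₁ A hA))
  rw [← ofReal_measureReal, ← ofReal_measureReal, ← ofReal_measureReal,
    ← ENNReal.ofReal_mul measureReal_nonneg, h_real]

end CondIndep

theorem indepFun_of_obfuscation_general
    {Ω 𝓢 𝓧 𝓤 𝓠 : Type*}
    [MeasurableSpace Ω] [StandardBorelSpace Ω]
    [MeasurableSpace 𝓢] [MeasurableSpace 𝓧] [MeasurableSpace 𝓤] [MeasurableSpace 𝓠]
    (μ : Measure Ω) [IsProbabilityMeasure μ]
    (S : Ω → 𝓢) (X : Ω → 𝓧) (U : Ω → 𝓤) (Q : Ω → 𝓠)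
    (hS : Measurable S) (hX : Measurable X) (hU : Measurable U) (hQ : Measurable Q)
    (hUS : IndepFun U S μ)
    (hQX : CondIndepFun (MeasurableSpace.comap U inferInstance) hU.comap_le Q X μ)
    (hQS : CondIndepFun (MeasurableSpace.comap (fun ω => (X ω, U ω)) inferInstance)
      (hX.prodMk hU).comap_le Q S μ) :
    IndepFun Q S μ := by
  rw [condIndepFun_iff_condIndep] at hQX hQS
  have hQS' : CondIndep
      (MeasurableSpace.comap U inferInstance ⊔ MeasurableSpace.comap X inferInstance)
      (MeasurableSpace.comap Q inferInstance) (MeasurableSpace.comap S inferInstance)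
      (sup_le hU.comap_le hX.comap_le) μ := by
    convert hQS using 1
    rw [sup_comm]
    exact (MeasurableSpace.comap_prodMk X U).symm
  rw [IndepFun_iff_Indep] at hUS ⊢
  exact indep_of_condIndep_of_indep hU.comap_le hQ.comap_le hS.comap_le
    (condIndep_of_condIndep_sup hU.comap_le hQ.comap_le hX.comap_le hS.comap_le hQX hQS') hUS

/-- **Privacy of the concatenation scheme.** Let `S`, `X`, `U`, `Q` be random variables on a
probability space, each taking values in a standard Borel measurable space. If `U` is independent
of `S`, `Q` is conditionally independent of `X` given `U`, and `Q` is conditionally independent of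
`S` given the pair `(X, U)`, then `Q` is independent of `S`. -/
theorem indepFun_of_obfuscation
    {Ω 𝓢 𝓧 𝓤 𝓠 : Type*}
    [MeasurableSpace Ω] [StandardBorelSpace Ω] [Nonempty Ω]
    [MeasurableSpace 𝓢] [StandardBorelSpace 𝓢]
    [MeasurableSpace 𝓧] [StandardBorelSpace 𝓧]
    [MeasurableSpace 𝓤] [StandardBorelSpace 𝓤]
    [MeasurableSpace 𝓠] [StandardBorelSpace 𝓠]
    (μ : Measure Ω) [IsProbabilityMeasure μ]
    (S : Ω → 𝓢) (X : Ω → 𝓧) (U : Ω → 𝓤) (Q : Ω → 𝓠)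
    (hS : Measurable S) (hX : Measurable X) (hU : Measurable U) (hQ : Measurable Q)
    (hUS : IndepFun U S μ)
    (hQX : CondIndepFun (MeasurableSpace.comap U inferInstance) hU.comap_le Q X μ)
    (hQS : CondIndepFun (MeasurableSpace.comap (fun ω => (X ω, U ω)) inferInstance)
      (hX.prodMk hU).comap_le Q S μ) :
    IndepFun Q S μ :=
  indepFun_of_obfuscation_general μ S X U Q hS hX hU hQ hUS hQX hQS
end
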